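/- arXiv:2303.02372 — 6 statements merged into one kernel-verified Lean document; each statement's English description precedes it below -/
import Mathlib

section
/- Let k ≥ 2 be an integer, c_k = √(k(k−1)(k+2√(2k)+2)), n a real number with √n > c_k, and p = ((c_k² − k(k−1)(k−2))·√n + k·c_k)/(2c_k). Then c_k·√n ≥ (k−1)·k·(k·p·n + 2(c_k·√n − p + k)·n) / ((c_k·√n − p + k)·p). -/
theorem stmt_6 (k : ℤ) (hk : 2 ≤ k) (n : ℝ) (hn : 0 < n)
    (c : ℝ) (hc : c = Real.sqrt ((k : ℝ) * (k - 1) * (k + 2 * Real.sqrt (2 * k) + 2)))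
    (hcn : Real.sqrt n > c)
    (p : ℝ) (hp : p = ((c ^ 2 - (k : ℝ) * (k - 1) * (k - 2)) * Real.sqrt n + k * c) / (2 * c)) :
    c * Real.sqrt n ≥
      ((k : ℝ) - 1) * k * (k * p * n + 2 * (c * Real.sqrt n - p + k) * n)
        / ((c * Real.sqrt n - p + k) * p) := by
  have hk2 : (2:ℝ) ≤ (k:ℝ) := by exact_mod_cast hk
  set kr := (k:ℝ) with hkr
  set q := Real.sqrt (2 * kr) with hqdef
  have hq0 : 0 ≤ q := Real.sqrt_nonneg _
  have hq2 : q ^ 2 = 2 * kr := Real.sq_sqrt (by linarith)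
  have hB : 0 < kr * (kr - 1) := by nlinarith
  have hcnn : 0 ≤ kr * (kr - 1) * (kr + 2 * q + 2) := by
    apply mul_nonneg hB.le; nlinarith
  have hc2 : c ^ 2 = kr * (kr - 1) * (kr + 2 * q + 2) := by
    rw [hc]; exact Real.sq_sqrt hcnn
  have hcpos : 0 < c := by
    rw [hc]; apply Real.sqrt_pos.mpr; nlinarith
  set s := Real.sqrt n with hsdef
  have hs0 : 0 < s := Real.sqrt_pos.mpr hn
  have hs2 : s ^ 2 = n := Real.sq_sqrt hn.le
  have hpc : p * (2 * c) = 2 * (kr * (kr - 1)) * (q + 2) * s + kr * c := by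
    rw [hp, div_mul_cancel₀ _ (by positivity : (2:ℝ) * c ≠ 0)]
    linear_combination s * hc2
  have hA : (c * s - p + kr) * (2 * c) = 2 * (kr * (kr - 1)) * (kr + q) * s + kr * c := by
    linear_combination 2 * s * hc2 - hpc
  have hppos : 0 < p := by
    have h1 : 0 < p * (2 * c) := by
      rw [hpc]
      nlinarith [mul_pos (mul_pos hB hs0) hcpos, mul_pos hB hs0, mul_nonneg (mul_pos hB hs0).le hq0]
    nlinarith [h1, hcpos]
  have hApos : 0 < c * s - p + kr := by
    have h1 : 0 < (c * s - p + kr) * (2 * c) := by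
      rw [hA]
      nlinarith [mul_pos (mul_pos hB hs0) hcpos, mul_pos hB hs0, mul_nonneg (mul_pos hB hs0).le hq0]
    nlinarith [h1, hcpos]
  rw [ge_iff_le, div_le_iff₀ (mul_pos hApos hppos), ← hs2]
  have hprod : ((c * s - p + kr) * (2 * c)) * (p * (2 * c))
      = (2 * (kr * (kr - 1)) * (kr + q) * s + kr * c) * (2 * (kr * (kr - 1)) * (q + 2) * s + kr * c) := by
    rw [hA, hpc]
  have key : (c * s * ((c * s - p + kr) * p)
        - (kr - 1) * kr * (kr * p * s ^ 2 + 2 * (c * s - p + kr) * s ^ 2)) * (4 * c ^ 2)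
      = s * c * (4 * kr * (kr * (kr - 1)) * q * s * c + kr ^ 2 * c ^ 2) := by
    linear_combination (s * c) * hprod - (2 * c * (kr * (kr - 1)) * kr * s ^ 2) * hpc
      - (4 * c * (kr * (kr - 1)) * s ^ 2) * hA + (4 * c * (kr * (kr - 1)) ^ 2 * s ^ 3) * hq2
  have hpos : 0 < s * c * (4 * kr * (kr * (kr - 1)) * q * s * c + kr ^ 2 * c ^ 2) := by
    apply mul_pos (mul_pos hs0 hcpos)
    have h2 : 0 ≤ 4 * kr * (kr * (kr - 1)) * q * s * c := by positivity
    nlinarith [mul_pos hcpos hcpos]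
  have h5 : 0 < (c * s * ((c * s - p + kr) * p)
      - (kr - 1) * kr * (kr * p * s ^ 2 + 2 * (c * s - p + kr) * s ^ 2)) * (4 * c ^ 2) :=
    key ▸ hpos
  have h4 : (0:ℝ) < 4 * c ^ 2 := by positivity
  rcases mul_pos_iff.mp h5 with ⟨h6, _⟩ | ⟨_, h7⟩
  · linarith
  · linarith
end

section
/- Let G be a finite simple graph and T a spanning tree of G such that every vertex of G outside a given subtree T₀ is adjacent to a fixed vertex u₃, the subtree T₀ satisfies: every vertex of T₀ other than u₃ has degree 1 or degree at least 3 in T₀, and |V(G)| − |V(T₀)| + deg_{T₀}(u₃) − 3 ≥ 0. Then the tree T' obtained from T₀ by joining u₃ to every vertex of V(G) \ V(T₀) is a spanning tree of G in which no vertex has degree 2. -/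
/-!
The vertices outside `T₀` become leaves hanging from `u₃`. A vertex on a cycle has two neighbours
on it, so no cycle of `T'` passes through a leaf; hence every cycle of `T'` lies in `T₀`, which is
acyclic. Connectivity is inherited from `T₀` since every new vertex is adjacent to `u₃ ∈ T₀`.
Degrees in `T₀` away from `u₃` are unchanged, new vertices have degree one, and `u₃` gains
`|V| - |V(T₀)|` neighbours, which the cardinality hypothesis makes at least three in total.
-/

namespace SimpleGraph

variable {V : Type*} {G : SimpleGraph V}

theorem IsAcyclic.of_induce_of_subsingleton_neighborSet {s : Set V}
    (hs : (G.induce s).IsAcyclic) (hout : ∀ v ∉ s, (G.neighborSet v).Subsingleton) :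
    G.IsAcyclic := by
  intro w c hc
  have hsupp : ∀ x ∈ c.support, x ∈ s := by
    intro x hx
    by_contra hxs
    obtain ⟨y, z, hyz, hnbr⟩ := Set.ncard_eq_two.1 (hc.ncard_neighborSet_toSubgraph_eq_two hx)
    have hsub := hnbr ▸ c.toSubgraph.neighborSet_subset x
    exact hyz (hout x hxs (hsub (by simp)) (hsub (by simp)))
  rw [← c.map_induce hsupp] at hc
  exact hs _ ((Walk.isCycle_map_iff_of_injective Subtype.val_injective).1 hc)

theorem Subgraph.isAcyclic_coe_of_spanningCoe {H : G.Subgraph} (h : H.spanningCoe.IsAcyclic) :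
    H.coe.IsAcyclic :=
  h.comap ⟨Subtype.val, id⟩ Subtype.val_injective

namespace Subgraph

def IsPendantJoin (T₀ : G.Subgraph) (u : V) (T : G.Subgraph) : Prop :=
  ∀ a b, T.Adj a b ↔ T₀.Adj a b ∨
    (a = u ∧ b ∉ T₀.verts ∧ G.Adj a b) ∨ (b = u ∧ a ∉ T₀.verts ∧ G.Adj b a)

namespace IsPendantJoin

variable {T₀ T : G.Subgraph} {u v : V}

theorem le (hT : T₀.IsPendantJoin u T) (hverts : T₀.verts ⊆ T.verts) : T₀ ≤ T :=
  ⟨hverts, fun _ _ h ↦ (hT _ _).2 (Or.inl h)⟩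

theorem adj_of_mem {a b : V} (hT : T₀.IsPendantJoin u T) (ha : a ∈ T₀.verts)
    (hb : b ∈ T₀.verts) (h : T.Adj a b) : T₀.Adj a b := by
  rcases (hT a b).1 h with h | ⟨-, hb', -⟩ | ⟨-, ha', -⟩
  exacts [h, absurd hb hb', absurd ha ha']

theorem adj_of_notMem (hT : T₀.IsPendantJoin u T) (hadj : ∀ v ∉ T₀.verts, G.Adj u v)
    (hv : v ∉ T₀.verts) : T.Adj u v :=
  (hT u v).2 (Or.inr (Or.inl ⟨rfl, hv, hadj v hv⟩))

theorem neighborSet_subset_of_notMem (hT : T₀.IsPendantJoin u T) (hu : u ∈ T₀.verts)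
    (hv : v ∉ T₀.verts) : T.neighborSet v ⊆ {u} := by
  intro w h
  rcases (hT v w).1 h with h | ⟨rfl, -, -⟩ | ⟨rfl, -, -⟩
  exacts [absurd h.fst_mem hv, absurd hu hv, rfl]

theorem neighborSet_of_notMem (hT : T₀.IsPendantJoin u T) (hu : u ∈ T₀.verts)
    (hadj : ∀ v ∉ T₀.verts, G.Adj u v) (hv : v ∉ T₀.verts) : T.neighborSet v = {u} :=
  (hT.neighborSet_subset_of_notMem hu hv).antisymm
    (Set.singleton_subset_iff.2 (hT.adj_of_notMem hadj hv).symm)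

theorem neighborSet_of_mem_of_ne (hT : T₀.IsPendantJoin u T) (hv : v ∈ T₀.verts)
    (hvu : v ≠ u) : T.neighborSet v = T₀.neighborSet v := by
  ext w
  refine ⟨fun h ↦ ?_, fun h ↦ (hT v w).2 (Or.inl h)⟩
  rcases (hT v w).1 h with h | ⟨rfl, -, -⟩ | ⟨-, hv', -⟩
  exacts [h, absurd rfl hvu, absurd hv hv']

theorem neighborSet_self (hT : T₀.IsPendantJoin u T) (hu : u ∈ T₀.verts)
    (hadj : ∀ v ∉ T₀.verts, G.Adj u v) :
    T.neighborSet u = T₀.neighborSet u ∪ T₀.vertsᶜ := by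
  ext w
  refine ⟨fun h ↦ ?_, ?_⟩
  · rcases (hT u w).1 h with h | ⟨-, hw, -⟩ | ⟨-, hu', -⟩
    exacts [Or.inl h, Or.inr hw, absurd hu hu']
  · rintro (h | hw)
    exacts [(hT u w).2 (Or.inl h), hT.adj_of_notMem hadj hw]

theorem ncard_neighborSet_self_add [Finite V] (hT : T₀.IsPendantJoin u T)
    (hu : u ∈ T₀.verts) (hadj : ∀ v ∉ T₀.verts, G.Adj u v) :
    (T.neighborSet u).ncard + T₀.verts.ncard = (T₀.neighborSet u).ncard + Nat.card V := by
  have hdisj : Disjoint (T₀.neighborSet u) T₀.vertsᶜ :=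
    Set.disjoint_compl_right_iff_subset.2 (T₀.neighborSet_subset_verts u)
  rw [hT.neighborSet_self hu hadj, Set.ncard_union_eq hdisj, add_assoc,
    Set.ncard_compl_add_ncard]

theorem ncard_neighborSet_ne_two [Finite V] (hT : T₀.IsPendantJoin u T) (hu : u ∈ T₀.verts)
    (hadj : ∀ v ∉ T₀.verts, G.Adj u v)
    (hdeg : ∀ v ∈ T₀.verts, v ≠ u → (T₀.neighborSet v).ncard ≠ 2)
    (hcard : T₀.verts.ncard + 3 ≤ Nat.card V + (T₀.neighborSet u).ncard) (v : V) :
    (T.neighborSet v).ncard ≠ 2 := by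
  by_cases hv : v ∈ T₀.verts
  · by_cases hvu : v = u
    · subst hvu
      have := hT.ncard_neighborSet_self_add hu hadj
      omega
    · rw [hT.neighborSet_of_mem_of_ne hv hvu]
      exact hdeg v hv hvu
  · simp [hT.neighborSet_of_notMem hu hadj hv]

theorem isAcyclic_coe (hT : T₀.IsPendantJoin u T) (hu : u ∈ T₀.verts)
    (h : T₀.coe.IsAcyclic) : T.coe.IsAcyclic := by
  refine isAcyclic_coe_of_spanningCoe (.of_induce_of_subsingleton_neighborSet (s := T₀.verts)
    (h.anti fun a b hab ↦ hT.adj_of_mem a.2 b.2 hab) fun v hv ↦ ?_)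
  exact Set.subsingleton_singleton.anti (hT.neighborSet_subset_of_notMem hu hv)

theorem connected_coe (hT : T₀.IsPendantJoin u T) (hu : u ∈ T₀.verts)
    (hadj : ∀ v ∉ T₀.verts, G.Adj u v) (hverts : T.verts = Set.univ) (h : T₀.coe.Connected) :
    T.coe.Connected := by
  have hle : T₀ ≤ T := hT.le (hverts ▸ Set.subset_univ _)
  refine (connected_iff_exists_forall_reachable _).2 ⟨⟨u, hle.1 hu⟩, fun ⟨v, _⟩ ↦ ?_⟩
  by_cases hv : v ∈ T₀.verts
  · exact (h.preconnected ⟨u, hu⟩ ⟨v, hv⟩).map (inclusion hle)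
  · exact Adj.reachable (hT.adj_of_notMem hadj hv)

end IsPendantJoin

end Subgraph

end SimpleGraph

theorem stmt_7 {V : Type*} [Fintype V] (G : SimpleGraph V) (T₀ : G.Subgraph) (u₃ : V)
    (hu₃ : u₃ ∈ T₀.verts)
    (htree : T₀.coe.IsTree)
    (hadj : ∀ v : V, v ∉ T₀.verts → G.Adj u₃ v)
    (hdeg : ∀ v ∈ T₀.verts, v ≠ u₃ →
      (T₀.neighborSet v).ncard = 1 ∨ 3 ≤ (T₀.neighborSet v).ncard)
    (hcard : (T₀.verts.ncard : ℤ) ≤ (Fintype.card V : ℤ) + ((T₀.neighborSet u₃).ncard : ℤ) - 3)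
    (T' : G.Subgraph)
    (hT'verts : T'.verts = Set.univ)
    (hT'adj : ∀ a b : V, T'.Adj a b ↔ (T₀.Adj a b ∨
      (a = u₃ ∧ b ∉ T₀.verts ∧ G.Adj a b) ∨ (b = u₃ ∧ a ∉ T₀.verts ∧ G.Adj b a))) :
    T'.coe.IsTree ∧ ∀ v : V, (T'.neighborSet v).ncard ≠ 2 := by
  have hT : T₀.IsPendantJoin u₃ T' := hT'adj
  refine ⟨⟨hT.connected_coe hu₃ hadj hT'verts htree.connected,
    hT.isAcyclic_coe hu₃ htree.isAcyclic⟩, hT.ncard_neighborSet_ne_two hu₃ hadj ?_ ?_⟩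
  · intro v hv hvu
    rcases hdeg v hv hvu with h | h <;> omega
  · rw [Nat.card_eq_fintype_card]
    omega
end

section
/- For all integers n ≥ 8, the graph D_n, obtained from a complete graph K on n−2 vertices and a path P of order 3 by identifying one vertex of K with an endvertex of P, has no homeomorphically irreducible spanning tree (HIST), i.e., every spanning tree of D_n contains a vertex of degree 2. -/
/-- `Dgraph n`: a clique on the vertices `0, …, n-3` (i.e. those with value `< n-2`)
together with a pendant path `(n-3) — (n-2) — (n-1)` attached at the clique vertex `n-3`. -/
def Dgraph (n : ℕ) : SimpleGraph (Fin n) :=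
  SimpleGraph.fromRel (fun i j =>
    ((i : ℕ) < n - 2 ∧ (j : ℕ) < n - 2) ∨ ((j : ℕ) = (i : ℕ) + 1 ∧ n - 3 ≤ (i : ℕ)))

/-- Any nontrivial walk starts with an edge. -/
lemma walk_first_edge {V : Type*} {G : SimpleGraph V} {u v : V}
    (w : G.Walk u v) (huv : u ≠ v) : ∃ x, G.Adj u x := by
  cases w with
  | nil => exact absurd rfl huv
  | cons h _ => exact ⟨_, h⟩

/-- If all neighbors of `b` are among `{a, c}` and the only neighbor of `c` is `b`,
then any walk to `b` from a vertex outside `{b, c}` forces the edge `a—b`. -/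
lemma walk_forces_edge {V : Type*} {G : SimpleGraph V} {a b c : V}
    (hb : ∀ x, G.Adj b x → x = a ∨ x = c) (hc : ∀ x, G.Adj c x → x = b) :
    ∀ (u : V) (w : G.Walk u b), u ≠ b → u ≠ c → G.Adj a b := by
  suffices H : ∀ (u d : V) (w : G.Walk u d), d = b → u ≠ b → u ≠ c → G.Adj a b by
    intro u w; exact H u b w rfl
  intro u d w
  induction w with
  | nil => intro hdb h _; exact absurd hdb h
  | @cons u' v d' h p ih =>
    intro hdb hub huc
    subst d'
    by_cases hvb : v = b
    · subst hvb
      rcases hb u' h.symm with rfl | rfl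
      · exact h
      · exact absurd rfl huc
    · by_cases hvc : v = c
      · subst hvc
        exact absurd (hc u' h.symm) hub
      · exact ih rfl hvb hvc

theorem stmt_8 (n : ℕ) (hn : 8 ≤ n) (T : SimpleGraph (Fin n))
    (hTsub : T ≤ Dgraph n) (hT : T.IsTree) :
    ∃ v : Fin n, (T.neighborSet v).ncard = 2 := by
  have h3 : n - 3 < n := by omega
  have h2 : n - 2 < n := by omega
  have h1 : n - 1 < n := by omega
  set a : Fin n := ⟨n-3, h3⟩ with ha
  set b : Fin n := ⟨n-2, h2⟩ with hbdef
  set c : Fin n := ⟨n-1, h1⟩ with hcdef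
  have hab : a ≠ b := by simp only [ha, hbdef, ne_eq, Fin.mk.injEq]; omega
  have hac : a ≠ c := by simp only [ha, hcdef, ne_eq, Fin.mk.injEq]; omega
  have hbc : b ≠ c := by simp only [hbdef, hcdef, ne_eq, Fin.mk.injEq]; omega
  -- neighbors of b in Dgraph are a and c
  have hb : ∀ x : Fin n, (Dgraph n).Adj b x → x = a ∨ x = c := by
    intro x hx
    rw [Dgraph, SimpleGraph.fromRel_adj] at hx
    have hxlt := x.isLt
    obtain ⟨hne, h | h⟩ := hx
    · rcases h with ⟨p, q⟩ | ⟨p, q⟩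
      · exfalso; simp only [hbdef] at p; omega
      · right; apply Fin.ext; simp only [hbdef, hcdef] at p q ⊢; omega
    · rcases h with ⟨p, q⟩ | ⟨p, q⟩
      · exfalso; simp only [hbdef] at q; omega
      · left; apply Fin.ext; simp only [hbdef, ha] at p q ⊢; omega
  -- the only neighbor of c in Dgraph is b
  have hc : ∀ x : Fin n, (Dgraph n).Adj c x → x = b := by
    intro x hx
    rw [Dgraph, SimpleGraph.fromRel_adj] at hx
    have hxlt := x.isLt
    obtain ⟨hne, h | h⟩ := hx
    · rcases h with ⟨p, q⟩ | ⟨p, q⟩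
      · exfalso; simp only [hcdef] at p; omega
      · exfalso; simp only [hcdef] at p; omega
    · rcases h with ⟨p, q⟩ | ⟨p, q⟩
      · exfalso; simp only [hcdef] at q; omega
      · apply Fin.ext; simp only [hbdef, hcdef] at p q ⊢; omega
  have hb' : ∀ x, T.Adj b x → x = a ∨ x = c := fun x hx => hb x (hTsub hx)
  have hc' : ∀ x, T.Adj c x → x = b := fun x hx => hc x (hTsub hx)
  have hconn := hT.isConnected
  -- T.Adj c b
  have hTcb : T.Adj c b := by
    obtain ⟨w⟩ := hconn c b
    obtain ⟨x, hx⟩ := walk_first_edge w hbc.symm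
    have := hc' x hx
    subst this; exact hx
  -- T.Adj a b
  have hTab : T.Adj a b := by
    obtain ⟨w⟩ := hconn a b
    exact walk_forces_edge hb' hc' a w hab hac
  refine ⟨b, ?_⟩
  have hset : T.neighborSet b = {a, c} := by
    ext x
    simp only [SimpleGraph.mem_neighborSet, Set.mem_insert_iff, Set.mem_singleton_iff]
    constructor
    · intro hx; exact hb' x hx
    · rintro (rfl | rfl)
      · exact hTab.symm
      · exact hTcb.symm
  rw [hset, Set.ncard_pair hac]
end

section
/- Let G be a connected simple graph of order n ≥ 10 with σ₂(G) ≥ n − 2, and let u, v ∈ V(G) with dist(u,v) = diam(G) ≥ 3. Then N(u) ∪ N(v) = V(G) \ {u, v}, deg(u) + deg(v) = n − 2, and diam(G) = 3. -/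
/-!
If `dist u v ≥ 3`, the neighbourhoods of `u` and `v` are disjoint and avoid `{u, v}`, so
`deg u + deg v ≤ n - 2`; the degree-sum condition turns this into equality, hence every other
vertex is adjacent to `u` or to `v`. The vertex at distance `2` from `u` on a shortest
`u`–`v` path is not adjacent to `u`, so it is adjacent to `v`, which forces `dist u v = 3`.
-/

namespace SimpleGraph

variable {V : Type*} {G : SimpleGraph V} {u v : V}

lemma two_lt_edist_of_two_lt_dist (h : 2 < G.dist u v) : 2 < G.edist u v := by
  have hreach : G.Reachable u v := Reachable.of_dist_ne_zero (by omega)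
  rw [← hreach.coe_dist_eq_edist]
  exact_mod_cast h

lemma neighborSet_union_subset_compl_pair (h : ¬G.Adj u v) :
    G.neighborSet u ∪ G.neighborSet v ⊆ Set.univ \ {u, v} := by
  rintro w (hw | hw) <;> simp only [Set.mem_sdiff, Set.mem_univ, Set.mem_insert_iff,
    Set.mem_singleton_iff, true_and, not_or]
  · exact ⟨(G.ne_of_adj hw).symm, by rintro rfl; exact h hw⟩
  · exact ⟨by rintro rfl; exact h hw.symm, (G.ne_of_adj hw).symm⟩

lemma neighborSet_union_eq_of_two_lt_dist [Fintype V] (h : 2 < G.dist u v)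
    (hdeg : Fintype.card V - 2 ≤ (G.neighborSet u).ncard + (G.neighborSet v).ncard) :
    G.neighborSet u ∪ G.neighborSet v = Set.univ \ {u, v} ∧
      (G.neighborSet u).ncard + (G.neighborSet v).ncard = Fintype.card V - 2 := by
  obtain ⟨hne, hnadj, hcommon⟩ := two_lt_edist_iff.mp (two_lt_edist_of_two_lt_dist h)
  have hdisj : Disjoint (G.neighborSet u) (G.neighborSet v) :=
    Set.disjoint_iff_inter_eq_empty.mpr hcommon
  have hunion : (G.neighborSet u ∪ G.neighborSet v).ncard =
      (G.neighborSet u).ncard + (G.neighborSet v).ncard :=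
    Set.ncard_union_eq hdisj (Set.toFinite _) (Set.toFinite _)
  have hcompl : (Set.univ \ ({u, v} : Set V)).ncard = Fintype.card V - 2 := by
    rw [Set.ncard_sdiff (Set.subset_univ _), Set.ncard_univ, Set.ncard_pair hne,
      Nat.card_eq_fintype_card]
  have hsub := neighborSet_union_subset_compl_pair hnadj
  have heq : G.neighborSet u ∪ G.neighborSet v = Set.univ \ {u, v} :=
    Set.eq_of_subset_of_ncard_le hsub (by omega) (Set.toFinite _)
  exact ⟨heq, by rw [← hunion, heq, hcompl]⟩

lemma Reachable.exists_dist_eq_of_le_dist (hreach : G.Reachable u v) {k : ℕ}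
    (hk : k ≤ G.dist u v) : ∃ x, G.dist u x = k ∧ G.dist x v = G.dist u v - k := by
  obtain ⟨p, hp⟩ := hreach.exists_walk_length_eq_dist
  have hleft : G.dist u (p.getVert k) ≤ k := by
    simpa [Walk.take_length, hp, hk] using G.dist_le (p.take k)
  have hright : G.dist (p.getVert k) v ≤ G.dist u v - k := by
    simpa [Walk.drop_length, hp] using G.dist_le (p.drop k)
  have htri : G.dist u v ≤ G.dist u (p.getVert k) + G.dist (p.getVert k) v :=
    (p.take k).reachable.dist_triangle_left v
  exact ⟨p.getVert k, by omega, by omega⟩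

lemma dist_le_three_of_neighborSet_union_eq
    (h : G.neighborSet u ∪ G.neighborSet v = Set.univ \ {u, v}) : G.dist u v ≤ 3 := by
  by_contra! hlt
  have hreach : G.Reachable u v := Reachable.of_dist_ne_zero (by omega)
  obtain ⟨x, hux, hxv⟩ := hreach.exists_dist_eq_of_le_dist (k := 2) (by omega)
  have hx : x ∈ G.neighborSet u ∪ G.neighborSet v := by
    rw [h]
    simp only [Set.mem_sdiff, Set.mem_univ, Set.mem_insert_iff, Set.mem_singleton_iff,
      true_and, not_or]
    exact ⟨by rintro rfl; simp at hux, by rintro rfl; simp at hxv; omega⟩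
  rcases hx with hx | hx
  · rw [mem_neighborSet, ← dist_eq_one_iff_adj] at hx
    omega
  · rw [mem_neighborSet, ← dist_eq_one_iff_adj, dist_comm] at hx
    omega

end SimpleGraph

theorem stmt_10_general {V : Type*} [Fintype V] (G : SimpleGraph V)
    (hsigma : ∀ x y : V, x ≠ y → ¬ G.Adj x y →
      Fintype.card V - 2 ≤ (G.neighborSet x).ncard + (G.neighborSet y).ncard)
    (u v : V) (hdist : G.dist u v = G.diam) (hdiam : 3 ≤ G.diam) :
    G.neighborSet u ∪ G.neighborSet v = Set.univ \ {u, v} ∧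
    (G.neighborSet u).ncard + (G.neighborSet v).ncard = Fintype.card V - 2 ∧
    G.diam = 3 := by
  have h2 : 2 < G.dist u v := by omega
  obtain ⟨hne, hnadj, -⟩ :=
    SimpleGraph.two_lt_edist_iff.mp (SimpleGraph.two_lt_edist_of_two_lt_dist h2)
  obtain ⟨hunion, hsum⟩ :=
    SimpleGraph.neighborSet_union_eq_of_two_lt_dist h2 (hsigma u v hne hnadj)
  have h3 := SimpleGraph.dist_le_three_of_neighborSet_union_eq hunion
  exact ⟨hunion, hsum, by omega⟩

theorem stmt_10 {V : Type*} [Fintype V] (G : SimpleGraph V)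
    (hconn : G.Connected) (hn : 10 ≤ Fintype.card V)
    (hsigma : ∀ x y : V, x ≠ y → ¬ G.Adj x y →
      Fintype.card V - 2 ≤ (G.neighborSet x).ncard + (G.neighborSet y).ncard)
    (u v : V) (hdist : G.dist u v = G.diam) (hdiam : 3 ≤ G.diam) :
    G.neighborSet u ∪ G.neighborSet v = Set.univ \ {u, v} ∧
    (G.neighborSet u).ncard + (G.neighborSet v).ncard = Fintype.card V - 2 ∧
    G.diam = 3 :=
  stmt_10_general G hsigma u v hdist hdiam
end

section
/- Let G be a simple graph of order n with σ₂(G) ≥ n − 2. Suppose u₀, u₃ ∈ V(G) are non-adjacent with N(u₀) ∪ N(u₃) = V(G) \ {u₀, u₃}, N(u₀) ∩ N(u₃) = ∅, and deg(u₀) + deg(u₃) = n − 2. Then for any i ∈ {0,3} and any v ∈ N(u_i): deg(v) ≥ deg(u_i); moreover if N(v) ∩ N(u_{3−i}) = ∅ then N(v) = (N(u_i) \ {v}) ∪ {u_i}. -/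
/-!
A neighbour `v` of `u₀` is not adjacent to `u₃`, because `N(u₀)` and `N(u₃)` are disjoint, so
`σ₂` applied to `v, u₃` gives `deg v + deg u₃ ≥ n - 2 = deg u₀ + deg u₃`. If moreover `N(v)` misses
`N(u₃)`, then every neighbour of `v` is `u₀` or lies in `N(u₀) \ {v}`, since all vertices other
than `u₀, u₃` lie in `N(u₀) ∪ N(u₃)`; that set has exactly `deg u₀ ≤ deg v` elements, so it is
all of `N(v)`.
-/

namespace SimpleGraph

variable {V : Type*} {G : SimpleGraph V} {u w v : V}

lemma ne_and_not_adj_of_mem_neighborSet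
    (hunion : G.neighborSet u ∪ G.neighborSet w = Set.univ \ {u, w})
    (hinter : G.neighborSet u ∩ G.neighborSet w = ∅) (hv : v ∈ G.neighborSet u) :
    v ≠ w ∧ ¬ G.Adj v w := by
  have hvu : v ∈ Set.univ \ {u, w} := hunion ▸ Set.mem_union_left _ hv
  refine ⟨fun h ↦ hvu.2 (by simp [h]), fun hvw ↦ ?_⟩
  exact Set.notMem_empty v (hinter ▸ ⟨hv, G.adj_symm hvw⟩)

lemma neighborSet_subset_insert_of_inter_eq_empty
    (hunion : G.neighborSet u ∪ G.neighborSet w = Set.univ \ {u, w})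
    (hinter : G.neighborSet u ∩ G.neighborSet w = ∅) (hv : v ∈ G.neighborSet u)
    (hdisj : G.neighborSet v ∩ G.neighborSet w = ∅) :
    G.neighborSet v ⊆ insert u (G.neighborSet u \ {v}) := by
  intro x hx
  obtain rfl | hxu := eq_or_ne x u
  · exact Set.mem_insert x _
  have hxw : x ≠ w := by
    rintro rfl
    exact (ne_and_not_adj_of_mem_neighborSet hunion hinter hv).2 hx
  have hx' : x ∈ G.neighborSet u ∪ G.neighborSet w := by
    rw [hunion]
    simp [hxu, hxw]
  rcases hx' with hxu' | hxw'
  · exact Set.mem_insert_of_mem u ⟨hxu', (G.ne_of_adj hx).symm⟩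
  · exact absurd (hdisj ▸ ⟨hx, hxw'⟩ : x ∈ (∅ : Set V)) (Set.notMem_empty x)

lemma ncard_neighborSet_le_and_neighborSet_eq [Finite V] {n : ℕ}
    (hsigma : ∀ x y : V, x ≠ y → ¬ G.Adj x y →
      n - 2 ≤ (G.neighborSet x).ncard + (G.neighborSet y).ncard)
    (hunion : G.neighborSet u ∪ G.neighborSet w = Set.univ \ {u, w})
    (hinter : G.neighborSet u ∩ G.neighborSet w = ∅)
    (hdegsum : (G.neighborSet u).ncard + (G.neighborSet w).ncard = n - 2)
    (hv : v ∈ G.neighborSet u) :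
    (G.neighborSet u).ncard ≤ (G.neighborSet v).ncard ∧
      (G.neighborSet v ∩ G.neighborSet w = ∅ →
        G.neighborSet v = (G.neighborSet u \ {v}) ∪ {u}) := by
  obtain ⟨hvw, hnadj⟩ := ne_and_not_adj_of_mem_neighborSet hunion hinter hv
  have hdeg : (G.neighborSet u).ncard ≤ (G.neighborSet v).ncard := by
    have := hsigma v w hvw hnadj
    omega
  refine ⟨hdeg, fun hdisj ↦ ?_⟩
  rw [Set.union_singleton]
  refine Set.eq_of_subset_of_ncard_le
    (neighborSet_subset_insert_of_inter_eq_empty hunion hinter hv hdisj) ?_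
  rwa [Set.ncard_exchange (G.notMem_neighborSet_self) hv]

end SimpleGraph

open SimpleGraph in
theorem stmt_11_general {V : Type*} [Fintype V] (G : SimpleGraph V) (n : ℕ)
    (hsigma : ∀ x y : V, x ≠ y → ¬ G.Adj x y →
      n - 2 ≤ (G.neighborSet x).ncard + (G.neighborSet y).ncard)
    (u₀ u₃ : V)
    (hunion : G.neighborSet u₀ ∪ G.neighborSet u₃ = Set.univ \ {u₀, u₃})
    (hinter : G.neighborSet u₀ ∩ G.neighborSet u₃ = ∅)
    (hdegsum : (G.neighborSet u₀).ncard + (G.neighborSet u₃).ncard = n - 2) :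
    (∀ v ∈ G.neighborSet u₀,
      (G.neighborSet u₀).ncard ≤ (G.neighborSet v).ncard ∧
      (G.neighborSet v ∩ G.neighborSet u₃ = ∅ →
        G.neighborSet v = (G.neighborSet u₀ \ {v}) ∪ {u₀})) ∧
    (∀ v ∈ G.neighborSet u₃,
      (G.neighborSet u₃).ncard ≤ (G.neighborSet v).ncard ∧
      (G.neighborSet v ∩ G.neighborSet u₀ = ∅ →
        G.neighborSet v = (G.neighborSet u₃ \ {v}) ∪ {u₃})) := by
  refine ⟨fun v ↦ ncard_neighborSet_le_and_neighborSet_eq hsigma hunion hinter hdegsum,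
    fun v ↦ ncard_neighborSet_le_and_neighborSet_eq hsigma ?_ ?_ ?_⟩
  · rwa [Set.union_comm, Set.pair_comm]
  · rwa [Set.inter_comm]
  · rwa [add_comm]

theorem stmt_11 {V : Type*} [Fintype V] (G : SimpleGraph V) (n : ℕ) (hn : n = Fintype.card V)
    (hsigma : ∀ x y : V, x ≠ y → ¬ G.Adj x y →
      n - 2 ≤ (G.neighborSet x).ncard + (G.neighborSet y).ncard)
    (u₀ u₃ : V) (hne : u₀ ≠ u₃) (hnadj : ¬ G.Adj u₀ u₃)
    (hunion : G.neighborSet u₀ ∪ G.neighborSet u₃ = Set.univ \ {u₀, u₃})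
    (hinter : G.neighborSet u₀ ∩ G.neighborSet u₃ = ∅)
    (hdegsum : (G.neighborSet u₀).ncard + (G.neighborSet u₃).ncard = n - 2) :
    (∀ v ∈ G.neighborSet u₀,
      (G.neighborSet u₀).ncard ≤ (G.neighborSet v).ncard ∧
      (G.neighborSet v ∩ G.neighborSet u₃ = ∅ →
        G.neighborSet v = (G.neighborSet u₀ \ {v}) ∪ {u₀})) ∧
    (∀ v ∈ G.neighborSet u₃,
      (G.neighborSet u₃).ncard ≤ (G.neighborSet v).ncard ∧
      (G.neighborSet v ∩ G.neighborSet u₀ = ∅ →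
        G.neighborSet v = (G.neighborSet u₃ \ {v}) ∪ {u₃})) :=
  stmt_11_general G n hsigma u₀ u₃ hunion hinter hdegsum
end

section
/- Let k ≥ 2 and d ≥ 1 be integers with (k−1) | d, and let l = d/(k−1). The graph G_{k,d}, consisting of a complete bipartite graph K_{d,d} with parts U₁, U₂ together with l disjoint cliques K_{d+1}, where for each i the i-th clique is joined by a single edge from a vertex v_i of the clique to a distinct vertex u_i ∈ U₁, has no spanning tree T such that every vertex of T has degree 1 or degree greater than k. -/
/-- Vertices of `Gkd`: `Sum.inl (Sum.inl a)` is the vertex `a` of `U₁`,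
`Sum.inl (Sum.inr b)` is the vertex `b` of `U₂`, and `Sum.inr (i, j)` is the `j`-th vertex of
the `i`-th clique `H_i ≅ K_{d+1}`; `v_i` is the vertex `(i, 0)` and `u_i` is the vertex of `U₁`
with index `i`. -/
def Gkd (d l : ℕ) : SimpleGraph ((Fin d ⊕ Fin d) ⊕ (Fin l × Fin (d + 1))) :=
  SimpleGraph.fromRel (fun x y =>
    match x, y with
    | Sum.inl (Sum.inl _), Sum.inl (Sum.inr _) => True           -- complete bipartite U₁–U₂
    | Sum.inr (i, _), Sum.inr (i', _) => i = i'                  -- cliques K_{d+1}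
    | Sum.inl (Sum.inl a), Sum.inr (i, j) => (a : ℕ) = (i : ℕ) ∧ j = 0  -- edges u_i v_i
    | _, _ => False)


/-!
Root the tree at a vertex of `U₂`. Sending every other vertex to the first edge of a shortest
path towards the root is injective, so the `l (d + 1)` clique vertices account for that many
edges of `T` meeting the cliques, and at most `2d - 1` edges of `T` are left inside `K_{d,d}`.
On the other hand `U₁` sends at least `2d` edges into `U₂`: the clique `H_i` reaches the root
only through `u_i v_i` and `u_i` only through `U₂`, so `u_i` has degree at least `2`, hence more
than `k`, in `T`, and all but one of its edges go to `U₂`; the other `d - l` vertices of `U₁`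
contribute one edge each, and `l k + (d - l) = 2d`.
-/

open Finset Sum

namespace SimpleGraph

variable {V : Type*} {G : SimpleGraph V}

theorem Connected.exists_adj_dist_lt (hG : G.Connected) {v r : V} (h : v ≠ r) :
    ∃ w, G.Adj v w ∧ G.dist w r < G.dist v r := by
  obtain ⟨p, hp⟩ := hG.exists_walk_length_eq_dist v r
  cases p with
  | nil => exact absurd rfl h
  | cons hadj q =>
    refine ⟨_, hadj, ?_⟩
    have := dist_le q
    rw [Walk.length_cons] at hp
    omega

theorem Connected.exists_adj_mem_notMem (hG : G.Connected) {S : Set V} {x y : V} (hx : x ∈ S)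
    (hy : y ∉ S) : ∃ v ∈ S, ∃ w ∉ S, G.Adj v w := by
  obtain ⟨p⟩ := hG.preconnected x y
  obtain ⟨dt, -, hv, hw⟩ := p.exists_boundary_dart S hx hy
  exact ⟨_, hv, _, hw, dt.adj⟩

theorem Connected.card_le_card_filter_exists_mem [Fintype V] [DecidableEq V] [Fintype G.edgeSet]
    (hG : G.Connected) {r : V} {S : Finset V} (hr : r ∉ S) :
    #S ≤ #{e ∈ G.edgeFinset | ∃ v ∈ S, v ∈ e} := by
  have : ∀ v, ∃ w, v ∈ S → G.Adj v w ∧ G.dist w r < G.dist v r := fun v => by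
    by_cases hv : v ∈ S
    · obtain ⟨w, hw⟩ := hG.exists_adj_dist_lt (ne_of_mem_of_not_mem hv hr)
      exact ⟨w, fun _ => hw⟩
    · exact ⟨v, fun h => absurd h hv⟩
  choose next hnext using this
  refine card_le_card_of_injOn (fun v => s(v, next v)) (fun v hv => ?_) fun a ha b hb hab => ?_
  · simp only [coe_filter, Set.mem_ofPred_eq, mem_edgeFinset, mem_edgeSet]
    exact ⟨(hnext v hv).1, v, hv, Sym2.mem_mk_left _ _⟩
  · rcases Sym2.eq_iff.mp hab with ⟨h, -⟩ | ⟨hab, hba⟩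
    · exact h
    · have hba' := (hnext a ha).2
      have hab' := (hnext b hb).2
      rw [hba] at hba'
      rw [← hab] at hab'
      omega

end SimpleGraph

namespace Gkd

open SimpleGraph

variable {d l : ℕ}

lemma adj_inl_inl {a : Fin d} {y} (h : (Gkd d l).Adj (inl (inl a)) y) :
    (∃ b, y = inl (inr b)) ∨ ∃ i : Fin l, (a : ℕ) = i ∧ y = inr (i, 0) := by
  rcases y with (a' | b) | ⟨i, j⟩ <;> simp [Gkd] at h ⊢
  exact h

lemma adj_inr {i : Fin l} {j : Fin (d + 1)} {y} (h : (Gkd d l).Adj (inr (i, j)) y) :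
    (∃ j', y = inr (i, j')) ∨ j = 0 ∧ ∃ a : Fin d, (a : ℕ) = i ∧ y = inl (inl a) := by
  rcases y with (a' | b) | ⟨i', j'⟩ <;> simp [Gkd] at h ⊢ <;> tauto

def cliques (d l : ℕ) : Finset ((Fin d ⊕ Fin d) ⊕ (Fin l × Fin (d + 1))) :=
  univ.map .inr

lemma card_cliques : #(cliques d l) = l * (d + 1) := by
  simp [cliques]

variable (T : SimpleGraph ((Fin d ⊕ Fin d) ⊕ (Fin l × Fin (d + 1))))

open Classical in
noncomputable def nbrsU₂ (a : Fin d) : Finset (Fin d) :=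
  {b | T.Adj (inl (inl a)) (inl (inr b))}

@[simp]
lemma mem_nbrsU₂ {a b : Fin d} : b ∈ nbrsU₂ T a ↔ T.Adj (inl (inl a)) (inl (inr b)) := by
  simp [nbrsU₂]

lemma sum_card_nbrsU₂_le [Fintype T.edgeSet] :
    ∑ a, #(nbrsU₂ T a) ≤ #{e ∈ T.edgeFinset | ¬∃ v ∈ cliques d l, v ∈ e} := by
  rw [← card_sigma]
  refine card_le_card_of_injOn (fun p => s(inl (inl p.1), inl (inr p.2)))
    (fun p hp => ?_) fun p _ q _ hpq => ?_
  · simp only [coe_filter, Set.mem_ofPred_eq, mem_edgeFinset, mem_edgeSet]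
    refine ⟨(mem_nbrsU₂ T).mp (mem_sigma.mp hp).2, ?_⟩
    simp [cliques]
  · obtain ⟨h₁, h₂⟩ : p.1 = q.1 ∧ p.2 = q.2 := by simpa using hpq
    exact Sigma.ext h₁ (heq_of_eq h₂)

variable {T} (hT : T ≤ Gkd d l) (hconn : T.Connected) (hd : 0 < d)
include hT hconn hd

lemma adj_inr_zero {a : Fin d} {i : Fin l} (hai : (a : ℕ) = i) :
    T.Adj (inl (inl a)) (inr (i, 0)) := by
  obtain ⟨_, ⟨j, rfl⟩, q, hq, hadj⟩ := hconn.exists_adj_mem_notMem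
    (S := {x | ∃ j, x = inr (i, j)}) ⟨0, rfl⟩ (y := inl (inr ⟨0, hd⟩)) (by simp)
  rcases adj_inr (hT hadj) with ⟨j', rfl⟩ | ⟨rfl, a', ha', rfl⟩
  · exact absurd ⟨j', rfl⟩ hq
  · obtain rfl : a' = a := Fin.ext (ha'.trans hai.symm)
    exact hadj.symm

lemma nbrsU₂_nonempty (a : Fin d) : (nbrsU₂ T a).Nonempty := by
  obtain ⟨p, hp, q, hq, hadj⟩ := hconn.exists_adj_mem_notMem
    (S := {x | x = inl (inl a) ∨ ∃ i : Fin l, ∃ j, (i : ℕ) = a ∧ x = inr (i, j)})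
    (Or.inl rfl) (y := inl (inr ⟨0, hd⟩)) (by simp)
  rcases hp with rfl | ⟨i, j, hia, rfl⟩
  · rcases adj_inl_inl (hT hadj) with ⟨b, rfl⟩ | ⟨i, hai, rfl⟩
    · exact ⟨b, (mem_nbrsU₂ T).mpr hadj⟩
    · exact absurd (Or.inr ⟨i, 0, hai.symm, rfl⟩) hq
  · rcases adj_inr (hT hadj) with ⟨j', rfl⟩ | ⟨-, a', ha', rfl⟩
    · exact absurd (Or.inr ⟨i, j', hia, rfl⟩) hq
    · exact absurd (Or.inl (by rw [Fin.ext (ha'.trans hia)])) hq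

lemma le_card_nbrsU₂ {k : ℕ}
    (hdeg : ∀ v, (T.neighborSet v).ncard = 1 ∨ k < (T.neighborSet v).ncard)
    {a : Fin d} {i : Fin l} (hai : (a : ℕ) = i) : k ≤ #(nbrsU₂ T a) := by
  obtain ⟨b, hb⟩ := nbrsU₂_nonempty hT hconn hd a
  have htwo : 2 ≤ (T.neighborSet (inl (inl a))).ncard := by
    have hpair : {inr (i, 0), inl (inr b)} ⊆ T.neighborSet (inl (inl a)) :=
      Set.insert_subset_iff.mpr ⟨adj_inr_zero hT hconn hd hai, by simpa using hb⟩
    exact (Set.ncard_pair (by simp)).symm.le.trans (Set.ncard_le_ncard hpair)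
  have hsub : T.neighborSet (inl (inl a)) ⊆
      insert (inr (i, 0)) ((inl ∘ inr) '' (nbrsU₂ T a : Set (Fin d))) := by
    intro y hy
    rcases adj_inl_inl (hT hy) with ⟨b', rfl⟩ | ⟨i', hai', rfl⟩
    · exact Or.inr ⟨b', by simpa using hy, rfl⟩
    · obtain rfl : i' = i := Fin.ext (hai'.symm.trans hai)
      exact Or.inl rfl
  have hle : (T.neighborSet (inl (inl a))).ncard ≤ #(nbrsU₂ T a) + 1 := by
    refine (Set.ncard_le_ncard hsub).trans ((Set.ncard_insert_le _ _).trans ?_)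
    simpa using Set.ncard_image_le (nbrsU₂ T a).finite_toSet
  rcases hdeg (inl (inl a)) with h | h <;> omega

lemma two_mul_le_sum_card_nbrsU₂ {k : ℕ}
    (hdeg : ∀ v, (T.neighborSet v).ncard = 1 ∨ k < (T.neighborSet v).ncard)
    (hld : l * (k - 1) = d) : 2 * d ≤ ∑ a, #(nbrsU₂ T a) := by
  have hl : l ≤ d := Nat.le_of_dvd hd ⟨k - 1, hld.symm⟩
  have hk : 0 < k - 1 := Nat.pos_of_ne_zero fun hk => by simp [hk] at hld; omega
  calc 2 * d = ∑ a : Fin d, (1 + if (a : ℕ) < l then k - 1 else 0) := by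
        simp only [sum_add_distrib, sum_const, card_univ, Fintype.card_fin, smul_eq_mul, mul_one,
          sum_ite, Fin.card_filter_val_lt, hl, inf_of_le_right]
        omega
    _ ≤ ∑ a, #(nbrsU₂ T a) := by
        refine sum_le_sum fun a _ => ?_
        split_ifs with ha
        · have := le_card_nbrsU₂ hT hconn hd hdeg (i := ⟨a, ha⟩) rfl
          omega
        · exact (nbrsU₂_nonempty hT hconn hd a).card_pos

end Gkd

theorem stmt_12_general (k d : ℕ) (hd : 1 ≤ d) (hdvd : (k - 1) ∣ d) :
    ¬ ∃ T : SimpleGraph ((Fin d ⊕ Fin d) ⊕ (Fin (d / (k - 1)) × Fin (d + 1))),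
        T ≤ Gkd d (d / (k - 1)) ∧ T.IsTree ∧
        ∀ v, (T.neighborSet v).ncard = 1 ∨ k < (T.neighborSet v).ncard := by
  rintro ⟨T, hT, htree, hdeg⟩
  classical
  have hcliques := htree.connected.card_le_card_filter_exists_mem
    (r := inl (inr ⟨0, hd⟩)) (S := Gkd.cliques d (d / (k - 1))) (by simp [Gkd.cliques])
  have hU₂ := (Gkd.two_mul_le_sum_card_nbrsU₂ hT htree.connected hd hdeg
    (Nat.div_mul_cancel hdvd)).trans (Gkd.sum_card_nbrsU₂_le T)
  have hedges := htree.card_edgeFinset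
  rw [← card_filter_add_card_filter_not
    (p := fun e => ∃ v ∈ Gkd.cliques d (d / (k - 1)), v ∈ e)] at hedges
  simp only [Gkd.card_cliques, Fintype.card_sum, Fintype.card_prod, Fintype.card_fin]
    at hcliques hedges
  omega

theorem stmt_12 (k d : ℕ) (hk : 2 ≤ k) (hd : 1 ≤ d) (hdvd : (k - 1) ∣ d) :
    ¬ ∃ T : SimpleGraph ((Fin d ⊕ Fin d) ⊕ (Fin (d / (k - 1)) × Fin (d + 1))),
        T ≤ Gkd d (d / (k - 1)) ∧ T.IsTree ∧
        ∀ v, (T.neighborSet v).ncard = 1 ∨ k < (T.neighborSet v).ncard :=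
  stmt_12_general k d hd hdvd
end
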